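/- Let H be a simple undirected graph on vertex set {1, …, n} with n ≥ 5. Let S ⊆ ℝ^n be the set of all vectors 𝟙_{i,j} (for 1 ≤ i < j ≤ n) having value 1 in coordinates i and j and 0 in all other coordinates. Let T ⊆ ℝ^n be the set of all vectors having value 1/2 in all coordinates except two coordinates i < j, in which they take values a_i, a_j ∈ {1, 2, 3}, subject to the restriction that a_i ≠ a_j whenever {i, j} is an edge of H. Then there exists a map Ψ : S → S ∪ T such that (1) Ψ(v) ⪰ v for all v ∈ S, (2) Ψ(v) ≻ v for some v ∈ S, and (3) for every coordinate k there exist m_k > 0 and b_k ∈ ℝ with Ψ_k(v) = m_k v_k + b_k for all v ∈ S, if and only if H is 3-colorable, i.e., there exists c : {1, …, n} → {1, 2, 3} with c(i) ≠ c(j) for every edge {i, j} of H. -/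

import Mathlib

/-!
A remap `Ψ` is coordinatewise affine, `Ψ_k(v) = m_k v_k + b_k`, so the value of `Ψ(𝟙_{i,j})` at
any `k ∉ {i, j}` is the constant `b_k`. Pareto improvement forces `Ψ(𝟙_{i,j})` to be either
`𝟙_{i,j}` itself or a vector of `T` supported on the same pair, so `b_k` is `0` or `1/2`.
The strictly improved vector lands in `T`, making `b_k = 1/2` outside its pair; with `n ≥ 5`
every other pair has a coordinate outside both pairs, so all of `S` is mapped into `T` and
`b ≡ 1/2`. Then `m_k + 1/2 = Ψ_k(𝟙_{k,j}) ∈ {1, 2, 3}` is a colour of `k`, proper by the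
constraint on `T`. Conversely a colouring `c` gives the remap `Ψ_k(v) = (c_k + 1/2) v_k + 1/2`.
-/

namespace SPIs

/-- `Pareto x y` means `y` is a weak Pareto improvement on `x`, i.e. `y ⪰ x`. -/
def Pareto {n : ℕ} (x y : Fin n → ℝ) : Prop := ∀ k, x k ≤ y k

/-- `StrictPareto x y` means `y` is a strict Pareto improvement on `x`, i.e. `y ≻ x`. -/
def StrictPareto {n : ℕ} (x y : Fin n → ℝ) : Prop := Pareto x y ∧ ∃ k, x k < y k

/-- The set `S` of input vectors: all vectors with value `1` in two coordinates `i ≠ j`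
and `0` elsewhere. -/
def colS (n : ℕ) : Set (Fin n → ℝ) :=
  {v | ∃ i j : Fin n, i ≠ j ∧ v = fun k => if k = i ∨ k = j then (1 : ℝ) else 0}

/-- The set `T` of target vectors for the graph `H`: all vectors with value `1/2` in all but
two coordinates `i ≠ j`, where they take values `a_i, a_j ∈ {1, 2, 3}` with `a_i ≠ a_j`
whenever `{i, j}` is an edge of `H`. -/
def colT {n : ℕ} (H : SimpleGraph (Fin n)) : Set (Fin n → ℝ) :=
  {v | ∃ i j : Fin n, i ≠ j ∧ ∃ ai aj : ℝ,
    ai ∈ ({1, 2, 3} : Set ℝ) ∧ aj ∈ ({1, 2, 3} : Set ℝ) ∧ (H.Adj i j → ai ≠ aj) ∧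
    v = fun k => if k = i then ai else if k = j then aj else 1 / 2}

lemma mem_one_two_three_iff {x : ℝ} :
    x ∈ ({1, 2, 3} : Set ℝ) ↔ ∃ c : Fin 3, x = (c : ℕ) + 1 := by
  constructor
  · rintro (rfl | rfl | rfl)
    exacts [⟨0, by norm_num⟩, ⟨1, by norm_num⟩, ⟨2, by norm_num⟩]
  · rintro ⟨c, rfl⟩
    fin_cases c <;> norm_num

lemma exists_fin_three_coloring_of_real {V : Type*} {G : SimpleGraph V} (f : V → ℝ)
    (hf : ∀ v, f v ∈ ({1, 2, 3} : Set ℝ)) (hG : ∀ u v, G.Adj u v → f u ≠ f v) :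
    ∃ c : V → Fin 3, ∀ u v, G.Adj u v → c u ≠ c v := by
  choose c hc using fun v => mem_one_two_three_iff.1 (hf v)
  exact ⟨c, fun u v huv h => hG u v huv (by rw [hc u, hc v, h])⟩

lemma Fin.exists_notMem_of_card_lt {n : ℕ} {s : Finset (Fin n)} (h : s.card < n) :
    ∃ k, k ∉ s := by
  obtain ⟨k, -, hk⟩ :=
    Finset.exists_mem_notMem_of_card_lt_card (s := s) (t := .univ)
      (by rwa [Finset.card_univ, Fintype.card_fin])
  exact ⟨k, hk⟩

lemma Fin.exists_ne_ne_ne {n : ℕ} (hn : 3 ≤ n) (k : Fin n) :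
    ∃ i j : Fin n, i ≠ j ∧ k ≠ i ∧ k ≠ j := by
  obtain ⟨i, hi⟩ := Fin.exists_notMem_of_card_lt (s := {k}) (by simp; omega)
  obtain ⟨j, hj⟩ := Fin.exists_notMem_of_card_lt (s := {k, i})
    ((Finset.card_le_two).trans_lt (by omega))
  simp only [Finset.mem_insert, Finset.mem_singleton, not_or] at hi hj
  exact ⟨i, j, Ne.symm hj.2, Ne.symm hi, Ne.symm hj.1⟩

/-- The vector `𝟙_{i,j}`. -/
def pairIndicator {n : ℕ} (i j : Fin n) : Fin n → ℝ := fun k => if k = i ∨ k = j then 1 else 0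

section pairIndicator

variable {n : ℕ} {i j k : Fin n}

lemma pairIndicator_mem_colS (h : i ≠ j) : pairIndicator i j ∈ colS n := ⟨i, j, h, rfl⟩

@[simp] lemma pairIndicator_apply_left : pairIndicator i j i = 1 := by simp [pairIndicator]

@[simp] lemma pairIndicator_apply_right : pairIndicator i j j = 1 := by simp [pairIndicator]

lemma pairIndicator_apply_of_ne (hki : k ≠ i) (hkj : k ≠ j) : pairIndicator i j k = 0 := by
  simp [pairIndicator, hki, hkj]

lemma pairIndicator_comm : pairIndicator i j = pairIndicator j i := by
  funext k
  simp only [pairIndicator, or_comm]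

lemma colS_apply_eq_zero_or_one {v : Fin n → ℝ} (hv : v ∈ colS n) (k : Fin n) :
    v k = 0 ∨ v k = 1 := by
  obtain ⟨i, j, -, rfl⟩ := hv
  by_cases hk : k = i ∨ k = j <;> simp [hk]

end pairIndicator

section ParetoImage

variable {n : ℕ} {i j p q : Fin n} {w : Fin n → ℝ}

lemma eq_and_eq_or_of_pareto (hij : i ≠ j) (hw : ∀ k, k ≠ p → k ≠ q → w k < 1)
    (hpar : Pareto (pairIndicator i j) w) : (i = p ∧ j = q) ∨ (i = q ∧ j = p) := by
  have mem_pair : ∀ k, 1 ≤ w k → k = p ∨ k = q := fun k hk => by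
    by_contra! h
    linarith [hw k h.1 h.2]
  have hi := mem_pair i (by simpa using hpar i)
  have hj := mem_pair j (by simpa using hpar j)
  rcases hi with rfl | rfl <;> rcases hj with rfl | rfl <;> simp_all

lemma eq_pairIndicator_of_mem_colS (hij : i ≠ j) (hw : w ∈ colS n)
    (hpar : Pareto (pairIndicator i j) w) : w = pairIndicator i j := by
  obtain ⟨p, q, -, rfl⟩ := hw
  have hlt : ∀ k, k ≠ p → k ≠ q → pairIndicator p q k < 1 := fun k hkp hkq => by
    simp [pairIndicator_apply_of_ne hkp hkq]
  rcases eq_and_eq_or_of_pareto hij hlt hpar with ⟨rfl, rfl⟩ | ⟨rfl, rfl⟩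
  · rfl
  · exact pairIndicator_comm

lemma apply_of_mem_colT {H : SimpleGraph (Fin n)} (hij : i ≠ j) (hw : w ∈ colT H)
    (hpar : Pareto (pairIndicator i j) w) :
    w i ∈ ({1, 2, 3} : Set ℝ) ∧ w j ∈ ({1, 2, 3} : Set ℝ) ∧ (H.Adj i j → w i ≠ w j) ∧
      ∀ k, k ≠ i → k ≠ j → w k = 1 / 2 := by
  obtain ⟨p, q, hpq, a, b, ha, hb, hab, rfl⟩ := hw
  have hlt : ∀ k, k ≠ p → k ≠ q →
      (if k = p then a else if k = q then b else (1 / 2 : ℝ)) < 1 := fun k hkp hkq => by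
    simp only [hkp, hkq, if_false]
    norm_num
  rcases eq_and_eq_or_of_pareto hij hlt hpar with ⟨rfl, rfl⟩ | ⟨rfl, rfl⟩
  · exact ⟨by simpa using ha, by simpa [hpq.symm] using hb,
      fun h => by simpa [hpq.symm] using hab h, fun k hki hkj => by simp [hki, hkj]⟩
  · exact ⟨by simpa [hpq.symm] using hb, by simpa using ha,
      fun h => by simpa [hpq.symm] using (hab h.symm).symm, fun k hki hkj => by simp [hki, hkj]⟩

end ParetoImage

section Remap

variable {n : ℕ} {H : SimpleGraph (Fin n)} {Ψ : (Fin n → ℝ) → Fin n → ℝ} {m b : Fin n → ℝ}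
  {i j k : Fin n}

lemma remap_apply_of_ne (haff : ∀ k, ∀ v ∈ colS n, Ψ v k = m k * v k + b k) (hij : i ≠ j)
    (hki : k ≠ i) (hkj : k ≠ j) : Ψ (pairIndicator i j) k = b k := by
  rw [haff k _ (pairIndicator_mem_colS hij), pairIndicator_apply_of_ne hki hkj, mul_zero,
    zero_add]

lemma remap_apply_left (haff : ∀ k, ∀ v ∈ colS n, Ψ v k = m k * v k + b k) (hij : i ≠ j) :
    Ψ (pairIndicator i j) i = m i + b i := by
  rw [haff i _ (pairIndicator_mem_colS hij), pairIndicator_apply_left, mul_one]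

lemma remap_apply_right (haff : ∀ k, ∀ v ∈ colS n, Ψ v k = m k * v k + b k) (hij : i ≠ j) :
    Ψ (pairIndicator i j) j = m j + b j := by
  rw [pairIndicator_comm, remap_apply_left haff hij.symm]

lemma remap_mem_colT (hn : 5 ≤ n) (hmem : ∀ v ∈ colS n, Ψ v ∈ colS n ∪ colT H)
    (hpar : ∀ v ∈ colS n, Pareto v (Ψ v)) (hstrict : ∃ v ∈ colS n, StrictPareto v (Ψ v))
    (haff : ∀ k, ∀ v ∈ colS n, Ψ v k = m k * v k + b k) (hij : i ≠ j) :
    Ψ (pairIndicator i j) ∈ colT H := by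
  obtain ⟨-, ⟨i', j', hij', rfl⟩, hstrict⟩ := hstrict
  change StrictPareto (pairIndicator i' j') (Ψ (pairIndicator i' j')) at hstrict
  have hT' : Ψ (pairIndicator i' j') ∈ colT H := by
    refine (hmem _ (pairIndicator_mem_colS hij')).resolve_left fun hS => ?_
    obtain ⟨k, hk⟩ := hstrict.2
    rw [eq_pairIndicator_of_mem_colS hij' hS hstrict.1] at hk
    exact lt_irrefl _ hk
  refine (hmem _ (pairIndicator_mem_colS hij)).resolve_left fun hS => ?_
  obtain ⟨k, hk⟩ := Fin.exists_notMem_of_card_lt (s := {i, j, i', j'})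
    (Finset.card_le_four.trans_lt (by omega))
  simp only [Finset.mem_insert, Finset.mem_singleton, not_or] at hk
  obtain ⟨hki, hkj, hki', hkj'⟩ := hk
  have h_zero : b k = 0 := by
    rw [← remap_apply_of_ne haff hij hki hkj,
      eq_pairIndicator_of_mem_colS hij hS (hpar _ (pairIndicator_mem_colS hij)),
      pairIndicator_apply_of_ne hki hkj]
  have h_half : b k = 1 / 2 := by
    rw [← remap_apply_of_ne haff hij' hki' hkj']
    exact (apply_of_mem_colT hij' hT' (hpar _ (pairIndicator_mem_colS hij'))).2.2.2 k hki' hkj'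
  norm_num [h_zero] at h_half

lemma remap_offset_eq_half (hn : 3 ≤ n) (hpar : ∀ v ∈ colS n, Pareto v (Ψ v))
    (haff : ∀ k, ∀ v ∈ colS n, Ψ v k = m k * v k + b k)
    (hT : ∀ i j : Fin n, i ≠ j → Ψ (pairIndicator i j) ∈ colT H) (k : Fin n) :
    b k = 1 / 2 := by
  obtain ⟨i, j, hij, hki, hkj⟩ := Fin.exists_ne_ne_ne hn k
  rw [← remap_apply_of_ne haff hij hki hkj]
  exact (apply_of_mem_colT hij (hT i j hij) (hpar _ (pairIndicator_mem_colS hij))).2.2.2 k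
    hki hkj

lemma exists_coloring_of_remap (hn : 5 ≤ n) (hmem : ∀ v ∈ colS n, Ψ v ∈ colS n ∪ colT H)
    (hpar : ∀ v ∈ colS n, Pareto v (Ψ v)) (hstrict : ∃ v ∈ colS n, StrictPareto v (Ψ v))
    (haff : ∀ k, ∀ v ∈ colS n, Ψ v k = m k * v k + b k) :
    ∃ c : Fin n → Fin 3, ∀ i j : Fin n, H.Adj i j → c i ≠ c j := by
  have hT i j (hij : i ≠ j) := remap_mem_colT hn hmem hpar hstrict haff hij
  have hb := remap_offset_eq_half (by omega) hpar haff hT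
  have hcolT i j (hij : i ≠ j) :=
    apply_of_mem_colT hij (hT i j hij) (hpar _ (pairIndicator_mem_colS hij))
  refine exists_fin_three_coloring_of_real (fun k => m k + 1 / 2) (fun k => ?_)
    (fun i j hadj => ?_)
  · obtain ⟨i, j, hij, hki, -⟩ := Fin.exists_ne_ne_ne (by omega) k
    simpa only [remap_apply_left haff hki, hb] using (hcolT k i hki).1
  · have hij := H.ne_of_adj hadj
    simpa only [remap_apply_left haff hij, remap_apply_right haff hij, hb] using
      (hcolT i j hij).2.2.1 hadj

end Remap

lemma remap_of_coloring {n : ℕ} {H : SimpleGraph (Fin n)} (hn : 3 ≤ n) {c : Fin n → Fin 3}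
    (hc : ∀ i j : Fin n, H.Adj i j → c i ≠ c j) :
    ∃ Ψ : (Fin n → ℝ) → Fin n → ℝ,
        (∀ v ∈ colS n, Ψ v ∈ colS n ∪ colT H) ∧
        (∀ v ∈ colS n, Pareto v (Ψ v)) ∧
        (∃ v ∈ colS n, StrictPareto v (Ψ v)) ∧
        (∀ k : Fin n, ∃ m b : ℝ, 0 < m ∧ ∀ v ∈ colS n, Ψ v k = m * v k + b) := by
  set Ψ : (Fin n → ℝ) → Fin n → ℝ := fun v k => (((c k : ℕ) : ℝ) + 1 / 2) * v k + 1 / 2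
  have hpar : ∀ v ∈ colS n, Pareto v (Ψ v) := fun v hv k => by
    have : (0 : ℝ) ≤ (c k : ℕ) := Nat.cast_nonneg _
    rcases colS_apply_eq_zero_or_one hv k with h | h <;> simp only [Ψ, h] <;> linarith
  refine ⟨Ψ, ?_, hpar, ?_, fun k => ⟨_, 1 / 2, by positivity, fun v _ => rfl⟩⟩
  · rintro - ⟨i, j, hij, rfl⟩
    right
    refine ⟨i, j, hij, (c i : ℕ) + 1, (c j : ℕ) + 1, mem_one_two_three_iff.2 ⟨_, rfl⟩,
      mem_one_two_three_iff.2 ⟨_, rfl⟩, fun hadj he => hc i j hadj (Fin.ext ?_), ?_⟩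
    · exact_mod_cast add_right_cancel he
    · funext k
      by_cases hki : k = i
      · subst hki
        simp only [Ψ, true_or, if_true]
        ring
      by_cases hkj : k = j
      · subst hkj
        simp only [Ψ, hki, or_true, if_true, if_false]
        ring
      simp [Ψ, hki, hkj]
  · obtain ⟨i, j, hij, hki, hkj⟩ := Fin.exists_ne_ne_ne hn ⟨0, by omega⟩
    refine ⟨_, pairIndicator_mem_colS hij, hpar _ (pairIndicator_mem_colS hij), ⟨0, by omega⟩,
      ?_⟩
    simp [Ψ, pairIndicator_apply_of_ne hki hkj]

/-- reduction in Theorem 7 of the paper: a strictly Pareto improving,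
entrywise positive affine map from `S` into `S ∪ T` exists iff `H` is 3-colorable. -/
theorem remap_iff_three_colorable (n : ℕ) (hn : 5 ≤ n) (H : SimpleGraph (Fin n)) :
    (∃ Ψ : (Fin n → ℝ) → Fin n → ℝ,
        (∀ v ∈ colS n, Ψ v ∈ colS n ∪ colT H) ∧
        (∀ v ∈ colS n, Pareto v (Ψ v)) ∧
        (∃ v ∈ colS n, StrictPareto v (Ψ v)) ∧
        (∀ k : Fin n, ∃ m b : ℝ, 0 < m ∧ ∀ v ∈ colS n, Ψ v k = m * v k + b)) ↔
      (∃ c : Fin n → Fin 3, ∀ i j : Fin n, H.Adj i j → c i ≠ c j) := by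
  constructor
  · rintro ⟨Ψ, hmem, hpar, hstrict, haff⟩
    choose m b _ hb using haff
    exact exists_coloring_of_remap hn hmem hpar hstrict hb
  · rintro ⟨c, hc⟩
    exact remap_of_coloring (by omega) hc

end SPIs
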